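/- arXiv:2605.08870 — 3 statements merged into one kernel-verified Lean document; each statement's English description precedes it below -/
import Mathlib

section
/- Let A be a real symmetric positive semidefinite n×n matrix of rank n−1 whose kernel is spanned by a nonzero vector x ∈ ℝⁿ. Then the adjugate of A satisfies adj(A) = (det*(A)/‖x‖₂²) · x xᵀ, where det*(A) is the product of the nonzero eigenvalues of A. -/
open scoped Classical

/-- The pseudo-determinant of a Hermitian real matrix: the product of its nonzero
eigenvalues. -/
noncomputable def pseudoDet {n : ℕ} (A : Matrix (Fin n) (Fin n) ℝ)
    (hA : A.IsHermitian) : ℝ :=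
  ∏ i ∈ Finset.univ.filter (fun i => hA.eigenvalues i ≠ 0), hA.eigenvalues i

/-- **Adjugate of a rank-`(n−1)` positive semidefinite matrix.**
If `A` is real symmetric positive semidefinite of rank `n − 1` with kernel spanned by the
nonzero vector `x`, then `adj(A) = (det*(A) / ‖x‖₂²) · x xᵀ`. -/
theorem adjugate_of_rank_sub_one_psd
    (n : ℕ) (A : Matrix (Fin n) (Fin n) ℝ)
    (hA : A.IsHermitian) (hpsd : A.PosSemidef)
    (hrank : A.rank = n - 1)
    (x : Fin n → ℝ) (hx : x ≠ 0)
    (hker : A.mulVec x = 0)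
    (hspan : ∀ y : Fin n → ℝ, A.mulVec y = 0 → ∃ c : ℝ, y = c • x) :
    A.adjugate = (pseudoDet A hA / (∑ i, x i ^ 2)) • Matrix.vecMulVec x x := by
  classical
  have hn : 0 < n := Nat.pos_of_ne_zero fun h => hx (by subst h; funext i; exact i.elim0)
  set d : Fin n → ℝ := hA.eigenvalues with hd
  -- exactly one zero eigenvalue
  have hcard : (Finset.univ.filter (fun i => d i ≠ 0)).card = n - 1 := by
    have := hA.rank_eq_card_non_zero_eigs
    rw [hrank] at this
    rw [← Fintype.card_subtype]
    exact this.symm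
  have hcard0 : (Finset.univ.filter (fun i => d i = 0)).card = 1 := by
    have h2 := Finset.card_filter_add_card_filter_not (s := Finset.univ)
      (p := fun i => d i ≠ 0)
    simp only [Finset.card_univ, Fintype.card_fin, not_not] at h2
    omega
  obtain ⟨j, hjset⟩ := Finset.card_eq_one.mp hcard0
  have hdj : d j = 0 := by
    have : j ∈ Finset.univ.filter (fun i => d i = 0) := hjset ▸ Finset.mem_singleton_self j
    simpa using this
  have huniq : ∀ i, d i = 0 → i = j := fun i hi => by
    have : i ∈ ({j} : Finset (Fin n)) := hjset ▸ (by simpa using hi)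
    simpa using this
  set U : Matrix (Fin n) (Fin n) ℝ := (hA.eigenvectorUnitary : Matrix (Fin n) (Fin n) ℝ) with hU
  have hUstar : star U * U = 1 := Matrix.mem_unitaryGroup_iff'.mp hA.eigenvectorUnitary.2
  have hUstar' : U * star U = 1 := Matrix.mem_unitaryGroup_iff.mp hA.eigenvectorUnitary.2
  have hUdet : IsUnit U.det := Matrix.isUnit_det_of_right_inverse hUstar'
  have hUsdet : IsUnit (star U).det := Matrix.isUnit_det_of_right_inverse hUstar
  have hUinv : U⁻¹ = star U := Matrix.inv_eq_right_inv hUstar'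
  have hUsinv : (star U)⁻¹ = U := Matrix.inv_eq_right_inv hUstar
  have adj_of_unit : ∀ (V : Matrix (Fin n) (Fin n) ℝ), IsUnit V.det →
      V.adjugate = V.det • V⁻¹ := fun V h => by
    rw [Matrix.inv_def, smul_smul, Ring.mul_inverse_cancel _ h, one_smul]
  have hspec : A = U * Matrix.diagonal d * star U := by
    have := hA.spectral_theorem
    simpa using this
  set u : Fin n → ℝ := ⇑(hA.eigenvectorBasis j) with hu
  have hAu : A.mulVec u = 0 := by
    rw [hA.mulVec_eigenvectorBasis, show hA.eigenvalues j = 0 from hdj]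
    simp
  obtain ⟨c, hc⟩ := hspan u hAu
  have hu1 : ∑ i, u i * u i = 1 := by
    have h1 := (orthonormal_iff_ite.mp hA.eigenvectorBasis.orthonormal) j j
    simp only [if_pos rfl] at h1
    rw [PiLp.inner_apply] at h1
    simpa [← sq] using h1
  have hS : (0:ℝ) < ∑ i, x i ^ 2 := by
    obtain ⟨i0, hi0⟩ := Function.ne_iff.mp hx
    simp only [Pi.zero_apply] at hi0
    have := Finset.single_le_sum (f := fun i => x i ^ 2)
      (fun i _ => sq_nonneg (x i)) (Finset.mem_univ i0)
    have h0 : 0 < x i0 ^ 2 := by positivity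
    linarith
  have hc2 : c ^ 2 * (∑ i, x i ^ 2) = 1 := by
    rw [hc] at hu1
    rw [← hu1]
    rw [Finset.mul_sum]
    congr 1; funext i
    simp [Pi.smul_apply]; ring
  -- adjugate computation
  set P := pseudoDet A hA with hP
  have hadjD : (Matrix.diagonal d).adjugate =
      Matrix.diagonal (fun i => if i = j then P else 0) := by
    rw [Matrix.adjugate_diagonal]
    have key : (fun i => ∏ k ∈ Finset.univ.erase i, d k) =
        (fun i => if i = j then P else 0) := by
      funext i
      by_cases hij : i = j
      · subst hij
        rw [if_pos rfl, hP]
        unfold pseudoDet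
        apply Finset.prod_congr _ (fun _ _ => rfl)
        ext k
        simp only [Finset.mem_erase, Finset.mem_univ, and_true, Finset.mem_filter, true_and]
        constructor
        · intro hk h0; exact hk (huniq k h0)
        · intro hk; intro hkj; exact hk (hkj ▸ hdj)
      · rw [if_neg hij]
        exact Finset.prod_eq_zero (Finset.mem_erase.mpr ⟨Ne.symm hij, Finset.mem_univ j⟩) hdj
    rw [key]
  have hadjA : A.adjugate = U * (Matrix.diagonal d).adjugate * star U := by
    rw [hspec, Matrix.adjugate_mul_distrib, Matrix.adjugate_mul_distrib,
      adj_of_unit _ hUdet, adj_of_unit _ hUsdet, hUinv, hUsinv]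
    have hdets : (star U).det * U.det = 1 := by
      rw [← Matrix.det_mul, hUstar, Matrix.det_one]
    have hdets' : U.det * (star U).det = 1 := by
      rw [← Matrix.det_mul, hUstar', Matrix.det_one]
    simp only [Matrix.smul_mul, Matrix.mul_smul, smul_smul, hdets, hdets', one_smul]
    rw [mul_assoc]
  rw [hadjA, hadjD]
  ext a b
  have hUaj : ∀ a, U a j = c * x a := fun a => by
    have : U a j = u a := rfl
    rw [this, hc]; rfl
  simp only [Matrix.mul_apply, Matrix.diagonal_apply, Matrix.star_apply, star_trivial,
    Matrix.smul_apply, Matrix.vecMulVec_apply, smul_eq_mul, mul_ite, ite_mul, mul_zero,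
    zero_mul, Finset.sum_ite_eq, Finset.sum_ite_eq', Finset.mem_univ, if_true, hUaj]
  have hcS : c ^ 2 = 1 / (∑ i, x i ^ 2) := eq_div_of_mul_eq hS.ne' hc2
  field_simp
  linear_combination P * x a * x b * hc2
end

section
/- Let A and A' be real symmetric positive semidefinite n×n matrices with the same kernel dimension. Suppose every positive eigenvalue of A is at least a > 0 and ‖A' − A‖₂ ≤ a/2, where ‖·‖₂ is the operator (spectral) norm. Then, with p = rank(A), |log det*(A') − log det*(A)| ≤ (2p/a) ‖A' − A‖₂. -/
open scoped Classical

/-- The operator (spectral) norm of a real matrix: the norm of the induced continuous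
linear endomorphism of Euclidean space. -/
noncomputable def opNorm {n : ℕ} (A : Matrix (Fin n) (Fin n) ℝ) : ℝ :=
  ‖Matrix.toEuclideanCLM (𝕜 := ℝ) A‖

section Helpers

open Finset Submodule

variable {n : ℕ}

local notation "E" n => EuclideanSpace ℝ (Fin n)


lemma inner_eq_zero_of_mem_span {F : Type*} [NormedAddCommGroup F] [InnerProductSpace ℝ F]
    {v : Fin n → F} (hv : Orthonormal ℝ v) {P : Fin n → Prop}
    {x : F} (hx : x ∈ Submodule.span ℝ (Set.range fun j : {j // P j} => v j))
    {k : Fin n} (hk : ¬ P k) : inner ℝ (v k) x = (0 : ℝ) := by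
  induction hx using Submodule.span_induction with
  | mem y hy =>
    obtain ⟨⟨j, hj⟩, rfl⟩ := hy
    exact hv.2 fun h : k = j => hk (h ▸ hj)
  | zero => simp
  | add y z _ _ hy hz => rw [inner_add_right, hy, hz, add_zero]
  | smul c y _ hy => rw [inner_smul_right, hy, mul_zero]

lemma norm_sq_eq_sum (b : OrthonormalBasis (Fin n) ℝ (E n)) (x : E n) :
    ‖x‖ ^ 2 = ∑ j, (inner ℝ (b j) x : ℝ) ^ 2 := by
  rw [← real_inner_self_eq_norm_sq, ← b.sum_inner_mul_inner x x]
  exact Finset.sum_congr rfl fun j _ => by rw [sq, real_inner_comm]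

lemma inner_clm_eq_sum (b : OrthonormalBasis (Fin n) ℝ (E n)) (T : (E n) →L[ℝ] (E n))
    (μ : Fin n → ℝ) (hT : ∀ j, T (b j) = μ j • b j) (x : E n) :
    (inner ℝ x (T x) : ℝ) = ∑ j, μ j * (inner ℝ (b j) x : ℝ) ^ 2 := by
  have hx : T x = ∑ j, (inner ℝ (b j) x : ℝ) • (μ j • b j) := by
    conv_lhs => rw [← b.sum_repr' x]
    rw [map_sum]
    exact Finset.sum_congr rfl fun j _ => by rw [map_smul, hT j]
  rw [hx, inner_sum]
  refine Finset.sum_congr rfl fun j _ => ?_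
  rw [inner_smul_right, inner_smul_right, real_inner_comm]
  ring

/-- Upper bound for the quadratic form on the span of selected eigenvectors. -/
lemma quad_le (b : OrthonormalBasis (Fin n) ℝ (E n)) (T : (E n) →L[ℝ] (E n))
    (μ : Fin n → ℝ) (hT : ∀ j, T (b j) = μ j • b j) {P : Fin n → Prop} {c : ℝ}
    (hc : ∀ j, P j → μ j ≤ c) {x : E n}
    (hx : x ∈ Submodule.span ℝ (Set.range fun j : {j // P j} => b j)) :
    (inner ℝ x (T x) : ℝ) ≤ c * ‖x‖ ^ 2 := by
  rw [inner_clm_eq_sum b T μ hT, norm_sq_eq_sum b, Finset.mul_sum]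
  refine Finset.sum_le_sum fun j _ => ?_
  by_cases hj : P j
  · exact mul_le_mul_of_nonneg_right (hc j hj) (sq_nonneg _)
  · rw [inner_eq_zero_of_mem_span b.orthonormal hx hj]
    simp

lemma quad_ge (b : OrthonormalBasis (Fin n) ℝ (E n)) (T : (E n) →L[ℝ] (E n))
    (μ : Fin n → ℝ) (hT : ∀ j, T (b j) = μ j • b j) {P : Fin n → Prop} {c : ℝ}
    (hc : ∀ j, P j → c ≤ μ j) {x : E n}
    (hx : x ∈ Submodule.span ℝ (Set.range fun j : {j // P j} => b j)) :
    c * ‖x‖ ^ 2 ≤ (inner ℝ x (T x) : ℝ) := by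
  rw [inner_clm_eq_sum b T μ hT, norm_sq_eq_sum b, Finset.mul_sum]
  refine Finset.sum_le_sum fun j _ => ?_
  by_cases hj : P j
  · exact mul_le_mul_of_nonneg_right (hc j hj) (sq_nonneg _)
  · rw [inner_eq_zero_of_mem_span b.orthonormal hx hj]
    simp

lemma finrank_span_selected (b : OrthonormalBasis (Fin n) ℝ (E n)) (P : Fin n → Prop) :
    Module.finrank ℝ (Submodule.span ℝ (Set.range fun j : {j // P j} => b j)) =
      Fintype.card {j // P j} :=
  finrank_span_eq_card ((b.orthonormal.comp _ Subtype.coe_injective).linearIndependent)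

/-- Two subspaces whose dimensions add to more than `n` intersect nontrivially. -/
lemma exists_ne_zero_mem_inf {V W : Submodule ℝ (E n)}
    (h : n < Module.finrank ℝ V + Module.finrank ℝ W) :
    ∃ x : E n, x ≠ 0 ∧ x ∈ V ∧ x ∈ W := by
  have h1 := Submodule.finrank_sup_add_finrank_inf_eq V W
  have h2 : Module.finrank ℝ ↥(V ⊔ W) ≤ n := by
    simpa using Submodule.finrank_le (V ⊔ W)
  have h3 : 0 < Module.finrank ℝ ↥(V ⊓ W) := by omega
  have : Nontrivial ↥(V ⊓ W) := Module.finrank_pos_iff.mp h3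
  obtain ⟨⟨x, hx⟩, hx0⟩ := exists_ne (0 : ↥(V ⊓ W))
  exact ⟨x, by simpa [Submodule.mk_eq_zero] using hx0, hx.1, hx.2⟩

lemma toEuclideanCLM_eigen {A : Matrix (Fin n) (Fin n) ℝ} (hA : A.IsHermitian) (j : Fin n) :
    Matrix.toEuclideanCLM (𝕜 := ℝ) A (hA.eigenvectorBasis j) =
      hA.eigenvalues j • hA.eigenvectorBasis j := by
  apply (WithLp.equiv 2 _).injective
  show WithLp.ofLp (p := 2) (Matrix.toEuclideanCLM (𝕜 := ℝ) A (hA.eigenvectorBasis j)) =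
    WithLp.ofLp (p := 2) (hA.eigenvalues j • hA.eigenvectorBasis j)
  rw [Matrix.ofLp_toEuclideanCLM]
  simpa using hA.mulVec_eigenvectorBasis j

/-- **Weyl's inequality** (one-sided) for sorted eigenvalues of Hermitian matrices. -/
theorem weyl_upper {A B : Matrix (Fin n) (Fin n) ℝ} (hA : A.IsHermitian) (hB : B.IsHermitian)
    (i : Fin n) :
    hB.eigenvalues (Tuple.sort hB.eigenvalues i) ≤
      hA.eigenvalues (Tuple.sort hA.eigenvalues i) + ‖Matrix.toEuclideanCLM (𝕜 := ℝ) (B - A)‖ := by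
  set σA := Tuple.sort hA.eigenvalues with hσA
  set σB := Tuple.sort hB.eigenvalues with hσB
  set lA := hA.eigenvalues
  set lB := hB.eigenvalues
  set bA := hA.eigenvectorBasis
  set bB := hB.eigenvectorBasis
  set V := Submodule.span ℝ (Set.range fun j : {j // σA.symm j ≤ i} => bA j)
  set W := Submodule.span ℝ (Set.range fun j : {j // i ≤ σB.symm j} => bB j)
  have hdimV : Module.finrank ℝ V = (i : ℕ) + 1 := by
    rw [finrank_span_selected]
    have e : {j // σA.symm j ≤ i} ≃ {k : Fin n // k ≤ i} :=
      (Equiv.subtypeEquiv σA (fun k => by simp)).symm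
    have h1 : Fintype.card {k : Fin n // k ≤ i} = (i:ℕ)+1 := by
      rw [Fintype.card_subtype]
      rw [show Finset.filter (fun k => k ≤ i) Finset.univ = Finset.Iic i from by ext k; simp]
      rw [Fin.card_Iic]
    convert (Fintype.card_congr e).trans h1 using 2
  have hdimW : Module.finrank ℝ W = n - (i : ℕ) := by
    rw [finrank_span_selected]
    have e : {j // i ≤ σB.symm j} ≃ {k : Fin n // i ≤ k} :=
      (Equiv.subtypeEquiv σB (fun k => by simp)).symm
    have h1 : Fintype.card {k : Fin n // i ≤ k} = n - (i:ℕ) := by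
      rw [Fintype.card_subtype]
      rw [show Finset.filter (fun k => i ≤ k) Finset.univ = Finset.Ici i from by ext k; simp]
      rw [Fin.card_Ici]
    convert (Fintype.card_congr e).trans h1 using 2
  obtain ⟨x, hx0, hxV, hxW⟩ : ∃ x : E n, x ≠ 0 ∧ x ∈ V ∧ x ∈ W := by
    apply exists_ne_zero_mem_inf
    rw [hdimV, hdimW]
    have := i.isLt
    omega
  set TA := Matrix.toEuclideanCLM (𝕜 := ℝ) A
  set TB := Matrix.toEuclideanCLM (𝕜 := ℝ) B
  set S := Matrix.toEuclideanCLM (𝕜 := ℝ) (B - A)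
  have hS : S = TB - TA := by simp [S, TA, TB, map_sub]
  have h1 : lB (σB i) * ‖x‖ ^ 2 ≤ (inner ℝ x (TB x) : ℝ) := by
    refine quad_ge bB TB lB (toEuclideanCLM_eigen hB) (fun j hj => ?_) hxW
    have := Tuple.monotone_sort lB hj
    simpa [σB, lB] using this
  have h2 : (inner ℝ x (TA x) : ℝ) ≤ lA (σA i) * ‖x‖ ^ 2 := by
    refine quad_le bA TA lA (toEuclideanCLM_eigen hA) (fun j hj => ?_) hxV
    have := Tuple.monotone_sort lA hj
    simpa [σA, lA] using this
  have h3 : (inner ℝ x (S x) : ℝ) ≤ ‖S‖ * ‖x‖ ^ 2 := by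
    calc (inner ℝ x (S x) : ℝ) ≤ ‖x‖ * ‖S x‖ := real_inner_le_norm x (S x)
      _ ≤ ‖x‖ * (‖S‖ * ‖x‖) := by
          exact mul_le_mul_of_nonneg_left (S.le_opNorm x) (norm_nonneg x)
      _ = ‖S‖ * ‖x‖ ^ 2 := by ring
  have hxpos : (0:ℝ) < ‖x‖ ^ 2 := pow_pos (norm_pos_iff.mpr hx0) 2
  have key : lB (σB i) * ‖x‖ ^ 2 ≤ (lA (σA i) + ‖S‖) * ‖x‖ ^ 2 := by
    have : (inner ℝ x (TB x) : ℝ) = inner ℝ x (TA x) + inner ℝ x (S x) := by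
      rw [hS, ContinuousLinearMap.sub_apply, inner_sub_right]; ring
    nlinarith [h1, h2, h3, this]
  exact le_of_mul_le_mul_right (by linarith [key]) hxpos

lemma upward_eq_top {n : ℕ} (S : Finset (Fin n))
    (hup : ∀ ⦃i j : Fin n⦄, i ≤ j → i ∈ S → j ∈ S) :
    S = Finset.univ.filter (fun i : Fin n => n - S.card ≤ (i : ℕ)) := by
  rcases Nat.eq_zero_or_pos S.card with hc | hc
  · rw [Finset.card_eq_zero.mp hc]
    symm
    rw [Finset.filter_eq_empty_iff]
    intro i _
    simp only [Finset.card_empty, Nat.sub_zero]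
    have := i.isLt
    omega
  · have hpn : S.card ≤ n := le_trans (Finset.card_le_univ S) (by simp)
    obtain ⟨i0, hi0⟩ := Finset.card_pos.mp hc
    have hn : 0 < n := i0.pos
    have hsub : S ⊆ Finset.univ.filter (fun i : Fin n => n - S.card ≤ (i : ℕ)) := by
      intro i hi
      simp only [Finset.mem_filter, Finset.mem_univ, true_and]
      by_contra h
      push_neg at h
      have hIci : Finset.Ici i ⊆ S := fun j hj => hup (Finset.mem_Ici.mp hj) hi
      have := Finset.card_le_card hIci
      rw [Fin.card_Ici] at this
      have := i.isLt
      omega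
    refine Finset.eq_of_subset_of_card_le hsub ?_
    have hT : Finset.univ.filter (fun i : Fin n => n - S.card ≤ (i : ℕ)) =
        Finset.Ici (⟨n - S.card, by omega⟩ : Fin n) := by
      ext i
      simp [Finset.mem_Ici, Fin.le_def]
    rw [hT, Fin.card_Ici]
    simp only [Fin.val_mk]
    omega

lemma prod_filter_comp {n : ℕ} (σ : Equiv.Perm (Fin n)) (f : Fin n → ℝ) :
    ∏ i ∈ Finset.univ.filter (fun i => f (σ i) ≠ 0), f (σ i) =
      ∏ i ∈ Finset.univ.filter (fun i => f i ≠ 0), f i := by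
  rw [Finset.prod_filter, Finset.prod_filter,
    ← Equiv.prod_comp σ (fun i => if f i ≠ 0 then f i else 1)]

lemma log_ratio_bound {a ε : ℝ} (ha : 0 < a) (hε : 0 ≤ ε) :
    ∀ u v : ℝ, 0 < u → a / 2 ≤ v → u - v ≤ ε → Real.log u - Real.log v ≤ 2 / a * ε := by
  intro u v hu hv huv
  have hv0 : 0 < v := lt_of_lt_of_le (by linarith) hv
  rw [← Real.log_div hu.ne' hv0.ne']
  have h1 : Real.log (u / v) ≤ u / v - 1 := Real.log_le_sub_one_of_pos (div_pos hu hv0)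
  have h2 : u / v - 1 ≤ 2 / a * ε := by
    rw [div_sub_one hv0.ne', div_le_iff₀ hv0]
    have h3 : 2 / a * ε * (a / 2) ≤ 2 / a * ε * v :=
      mul_le_mul_of_nonneg_left hv (by positivity)
    have h4 : 2 / a * ε * (a / 2) = ε := by field_simp
    linarith
  linarith

end Helpers

/-- **Weyl perturbation and log pseudo-determinant.**
Let `A, A'` be real symmetric positive semidefinite matrices with the same kernel
dimension. If every positive eigenvalue of `A` is at least `a > 0` and
`‖A' − A‖₂ ≤ a/2`, then with `p = rank A`,
`|log det*(A') − log det*(A)| ≤ (2p/a) ‖A' − A‖₂`. -/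
theorem log_pseudoDet_stability
    (n : ℕ) (A A' : Matrix (Fin n) (Fin n) ℝ)
    (hA : A.IsHermitian) (hA' : A'.IsHermitian)
    (hApsd : A.PosSemidef) (hA'psd : A'.PosSemidef)
    (hker : Module.finrank ℝ (LinearMap.ker A.mulVecLin) =
        Module.finrank ℝ (LinearMap.ker A'.mulVecLin))
    (a : ℝ) (ha : 0 < a)
    (hgap : ∀ i, 0 < hA.eigenvalues i → a ≤ hA.eigenvalues i)
    (hpert : opNorm (A' - A) ≤ a / 2) :
    |Real.log (pseudoDet A' hA') - Real.log (pseudoDet A hA)| ≤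
      (2 * A.rank / a) * opNorm (A' - A) := by
  classical
  set ε := opNorm (A' - A) with hεdef
  have hε : 0 ≤ ε := norm_nonneg _
  set σ := Tuple.sort hA.eigenvalues with hσ
  set τ := Tuple.sort hA'.eigenvalues with hτ
  set lam : Fin n → ℝ := fun i => hA.eigenvalues (σ i) with hlam
  set mu : Fin n → ℝ := fun i => hA'.eigenvalues (τ i) with hmu
  -- Weyl both directions
  have hweyl : ∀ i, |mu i - lam i| ≤ ε := by
    intro i
    have h1 := weyl_upper hA hA' i
    have h2 := weyl_upper hA' hA i
    have hnorm : ‖Matrix.toEuclideanCLM (𝕜 := ℝ) (A - A')‖ =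
        ‖Matrix.toEuclideanCLM (𝕜 := ℝ) (A' - A)‖ := by
      have h : Matrix.toEuclideanCLM (𝕜 := ℝ) (A - A') =
          -(Matrix.toEuclideanCLM (𝕜 := ℝ) (A' - A)) := by
        rw [← map_neg, neg_sub]
      rw [h, norm_neg]
    rw [hnorm] at h2
    have hεeq : ε = ‖Matrix.toEuclideanCLM (𝕜 := ℝ) (A' - A)‖ := rfl
    rw [abs_sub_le_iff, hεeq]
    exact ⟨by linarith, by linarith⟩
  -- ranks
  set p := A.rank with hp
  have hrankA' : A'.rank = p := by
    have h1 := LinearMap.finrank_range_add_finrank_ker A.mulVecLin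
    have h2 := LinearMap.finrank_range_add_finrank_ker A'.mulVecLin
    have e1 : A.rank = Module.finrank ℝ (LinearMap.range A.mulVecLin) := rfl
    have e2 : A'.rank = Module.finrank ℝ (LinearMap.range A'.mulVecLin) := rfl
    rw [Module.finrank_pi] at h1 h2
    simp only [Fintype.card_fin] at h1 h2
    omega
  -- cardinalities of nonzero sets
  have hcard_gen : ∀ (B : Matrix (Fin n) (Fin n) ℝ) (hB : B.IsHermitian)
      (π : Equiv.Perm (Fin n)),
      (Finset.univ.filter (fun i => hB.eigenvalues (π i) ≠ 0)).card = B.rank := by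
    intro B hB π
    have h1 : (Finset.univ.filter (fun i => hB.eigenvalues (π i) ≠ 0)).card =
        (Finset.univ.filter (fun i => hB.eigenvalues i ≠ 0)).card := by
      apply Finset.card_bij (fun i _ => π i)
      · intro i hi
        simp only [Finset.mem_filter, Finset.mem_univ, true_and] at hi ⊢
        exact hi
      · intro i _ j _ h
        exact π.injective h
      · intro j hj
        simp only [Finset.mem_filter, Finset.mem_univ, true_and] at hj
        exact ⟨π.symm j, by simp only [Finset.mem_filter, Finset.mem_univ, true_and,
          Equiv.apply_symm_apply]; exact hj, by simp⟩
    rw [h1, hB.rank_eq_card_non_zero_eigs]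
    rw [Fintype.card_subtype]
  have hcardA : (Finset.univ.filter (fun i => lam i ≠ 0)).card = p := hcard_gen A hA σ
  have hcardB : (Finset.univ.filter (fun i => mu i ≠ 0)).card = p := by
    rw [hcard_gen A' hA' τ, hrankA']
  -- nonzero sets are the top-p sets
  have hlam_mono : Monotone lam := Tuple.monotone_sort hA.eigenvalues
  have hmu_mono : Monotone mu := Tuple.monotone_sort hA'.eigenvalues
  have hlam_nn : ∀ i, 0 ≤ lam i := fun i => hApsd.eigenvalues_nonneg (σ i)
  have hmu_nn : ∀ i, 0 ≤ mu i := fun i => hA'psd.eigenvalues_nonneg (τ i)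
  set Tp := Finset.univ.filter (fun i : Fin n => n - p ≤ (i : ℕ)) with hTp
  have hSA : Finset.univ.filter (fun i => lam i ≠ 0) = Tp := by
    have hup : ∀ ⦃i j : Fin n⦄, i ≤ j → i ∈ Finset.univ.filter (fun i => lam i ≠ 0) →
        j ∈ Finset.univ.filter (fun i => lam i ≠ 0) := by
      intro i j hij hi
      simp only [Finset.mem_filter, Finset.mem_univ, true_and] at hi ⊢
      have h0 : 0 < lam i := lt_of_le_of_ne (hlam_nn i) (Ne.symm hi)
      exact ne_of_gt (lt_of_lt_of_le h0 (hlam_mono hij))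
    rw [upward_eq_top _ hup, hcardA]
  have hSB : Finset.univ.filter (fun i => mu i ≠ 0) = Tp := by
    have hup : ∀ ⦃i j : Fin n⦄, i ≤ j → i ∈ Finset.univ.filter (fun i => mu i ≠ 0) →
        j ∈ Finset.univ.filter (fun i => mu i ≠ 0) := by
      intro i j hij hi
      simp only [Finset.mem_filter, Finset.mem_univ, true_and] at hi ⊢
      have h0 : 0 < mu i := lt_of_le_of_ne (hmu_nn i) (Ne.symm hi)
      exact ne_of_gt (lt_of_lt_of_le h0 (hmu_mono hij))
    rw [upward_eq_top _ hup, hcardB]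
  have hTpcard : Tp.card = p := by rw [← hSA, hcardA]
  -- pseudo-determinants as products over Tp
  have hpdA : pseudoDet A hA = ∏ i ∈ Tp, lam i := by
    rw [pseudoDet, ← prod_filter_comp σ hA.eigenvalues, ← hSA]
  have hpdB : pseudoDet A' hA' = ∏ i ∈ Tp, mu i := by
    rw [pseudoDet, ← prod_filter_comp τ hA'.eigenvalues, ← hSB]
  -- positivity on Tp
  have hlam_pos : ∀ i ∈ Tp, a ≤ lam i := by
    intro i hi
    rw [← hSA] at hi
    simp only [Finset.mem_filter, Finset.mem_univ, true_and] at hi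
    exact hgap (σ i) (lt_of_le_of_ne (hlam_nn i) (Ne.symm hi))
  have hmu_pos : ∀ i ∈ Tp, a / 2 ≤ mu i := by
    intro i hi
    have h1 := hweyl i
    have h2 := hlam_pos i hi
    rw [abs_sub_le_iff] at h1
    linarith [h1.2, hpert]
  -- logs
  have hlogA : Real.log (pseudoDet A hA) = ∑ i ∈ Tp, Real.log (lam i) := by
    rw [hpdA, Real.log_prod]
    intro i hi
    exact ne_of_gt (lt_of_lt_of_le (by linarith) (hlam_pos i hi))
  have hlogB : Real.log (pseudoDet A' hA') = ∑ i ∈ Tp, Real.log (mu i) := by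
    rw [hpdB, Real.log_prod]
    intro i hi
    exact ne_of_gt (lt_of_lt_of_le (by linarith) (hmu_pos i hi))
  rw [hlogA, hlogB, ← Finset.sum_sub_distrib]
  calc |∑ i ∈ Tp, (Real.log (mu i) - Real.log (lam i))|
      ≤ ∑ i ∈ Tp, |Real.log (mu i) - Real.log (lam i)| := Finset.abs_sum_le_sum_abs _ _
    _ ≤ ∑ _i ∈ Tp, 2 / a * ε := by
        refine Finset.sum_le_sum fun i hi => ?_
        have h1 := hweyl i
        have hl := hlam_pos i hi
        have hm := hmu_pos i hi
        rw [abs_sub_le_iff] at h1 ⊢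
        constructor
        · exact log_ratio_bound ha hε (mu i) (lam i) (by linarith) (by linarith) h1.1
        · exact log_ratio_bound ha hε (lam i) (mu i) (by linarith) hm h1.2
    _ = (2 * p / a) * ε := by
        rw [Finset.sum_const, hTpcard, nsmul_eq_mul]
        ring
end

section
/- Let W and W' be real symmetric n×n matrices and D and D' diagonal n×n matrices with positive diagonal entries. Suppose every diagonal entry of D is at least d_min > 0, every diagonal entry of D' is at least d_min/2, ‖D' − D‖₂ ≤ ε, ‖W' − W‖₂ ≤ ε, and ‖W‖₂ ≤ d_max, where ‖·‖₂ is the operator norm. Then the normalized Laplacians 𝓛 = I − D^{−1/2} W D^{−1/2} and 𝓛' = I − (D')^{−1/2} W' (D')^{−1/2} satisfy ‖𝓛' − 𝓛‖₂ ≤ ε ( 2/d_min + (2 + √2) d_max / d_min² ). -/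
open Matrix
open scoped Matrix.Norms.L2Operator

theorem opNorm_eq_l2_opNorm {n : ℕ} (A : Matrix (Fin n) (Fin n) ℝ) : opNorm A = ‖A‖ := rfl

theorem norm_mul_mul_sub_mul_mul_le {R : Type*} [NormedRing R] (s s' w w' : R) :
    ‖s' * w' * s' - s * w * s‖ ≤ ‖s'‖ * ‖w' - w‖ * ‖s'‖ + ‖s' - s‖ * ‖w‖ * (‖s'‖ + ‖s‖) := by
  have h : s' * w' * s' - s * w * s =
      s' * (w' - w) * s' + (s' - s) * w * s' + s * w * (s' - s) := by
    noncomm_ring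
  rw [h]
  calc _ ≤ ‖s' * (w' - w) * s'‖ + ‖(s' - s) * w * s'‖ + ‖s * w * (s' - s)‖ := norm_add₃_le
    _ ≤ ‖s'‖ * ‖w' - w‖ * ‖s'‖ + ‖s' - s‖ * ‖w‖ * ‖s'‖ + ‖s‖ * ‖w‖ * ‖s' - s‖ := by
      gcongr <;> exact norm_mul₃_le
    _ = _ := by ring

theorem abs_inv_sqrt_sub_inv_sqrt_le {a b c : ℝ} (hc : 0 < c) (ha : c ≤ a) (hb : c ≤ b) :
    |(√a)⁻¹ - (√b)⁻¹| ≤ |a - b| / (2 * √c ^ 3) := by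
  have hsc : 0 < √c := Real.sqrt_pos.mpr hc
  have hca : √c ≤ √a := Real.sqrt_le_sqrt ha
  have hcb : √c ≤ √b := Real.sqrt_le_sqrt hb
  have hsa : 0 < √a := hsc.trans_le hca
  have hsb : 0 < √b := hsc.trans_le hcb
  have hden : 0 < √a * √b * (√a + √b) := by positivity
  -- `a - b = (√a - √b)(√a + √b)` turns the difference of inverse roots into a quotient
  have key : (√a)⁻¹ - (√b)⁻¹ = (b - a) / (√a * √b * (√a + √b)) := by
    field_simp
    linear_combination Real.sq_sqrt (hc.le.trans hb) - Real.sq_sqrt (hc.le.trans ha)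
  have hden_ge : 2 * √c ^ 3 ≤ √a * √b * (√a + √b) := by
    calc 2 * √c ^ 3 = √c * √c * (√c + √c) := by ring
      _ ≤ _ := by gcongr
  rw [key, abs_div, abs_sub_comm, abs_of_pos hden]
  exact div_le_div_of_nonneg_left (abs_nonneg _) (by positivity) hden_ge

section Diagonal

variable {ι : Type*} [Fintype ι] [DecidableEq ι]

theorem l2_opNorm_diagonal_inv_sqrt_le {d : ι → ℝ} {c : ℝ} (hc : 0 < c) (hd : ∀ i, c ≤ d i) :
    ‖diagonal (fun i => (√(d i))⁻¹)‖ ≤ (√c)⁻¹ := by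
  rw [l2_opNorm_diagonal, pi_norm_le_iff_of_nonneg (by positivity)]
  intro i
  rw [Real.norm_of_nonneg (by positivity)]
  gcongr
  exact hd i

theorem l2_opNorm_diagonal_inv_sqrt_sub_le {d d' : ι → ℝ} {c : ℝ} (hc : 0 < c)
    (hd : ∀ i, c ≤ d i) (hd' : ∀ i, c ≤ d' i) :
    ‖diagonal (fun i => (√(d' i))⁻¹) - diagonal (fun i => (√(d i))⁻¹)‖ ≤
      ‖diagonal d' - diagonal d‖ / (2 * √c ^ 3) := by
  rw [diagonal_sub, diagonal_sub, l2_opNorm_diagonal, l2_opNorm_diagonal,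
    pi_norm_le_iff_of_nonneg (by positivity)]
  intro i
  calc _ ≤ |d' i - d i| / (2 * √c ^ 3) := abs_inv_sqrt_sub_inv_sqrt_le hc (hd' i) (hd i)
    _ ≤ _ := by
      gcongr
      exact norm_le_pi_norm (d' - d) i

end Diagonal

theorem normalized_laplacian_perturbation_general
    (n : ℕ)
    (W W' : Matrix (Fin n) (Fin n) ℝ)
    (d d' : Fin n → ℝ)
    (dmin dmax ε : ℝ) (hdmin : 0 < dmin)
    (hd : ∀ i, dmin ≤ d i) (hd' : ∀ i, dmin / 2 ≤ d' i)
    (hD : opNorm (Matrix.diagonal d' - Matrix.diagonal d) ≤ ε)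
    (hWpert : opNorm (W' - W) ≤ ε)
    (hWnorm : opNorm W ≤ dmax) :
    opNorm
        ((1 - Matrix.diagonal (fun i => (Real.sqrt (d' i))⁻¹) * W' *
            Matrix.diagonal (fun i => (Real.sqrt (d' i))⁻¹)) -
          (1 - Matrix.diagonal (fun i => (Real.sqrt (d i))⁻¹) * W *
            Matrix.diagonal (fun i => (Real.sqrt (d i))⁻¹))) ≤
      ε * (2 / dmin + (2 + Real.sqrt 2) * dmax / dmin ^ 2) := by
  rw [opNorm_eq_l2_opNorm] at hD hWpert hWnorm ⊢
  have hε : 0 ≤ ε := (norm_nonneg _).trans hWpert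
  have hdmax : 0 ≤ dmax := (norm_nonneg _).trans hWnorm
  have hc : 0 < dmin / 2 := by positivity
  have hd₂ : ∀ i, dmin / 2 ≤ d i := fun i => (half_le_self hdmin.le).trans (hd i)
  have hS := l2_opNorm_diagonal_inv_sqrt_le hdmin hd
  have hS' := l2_opNorm_diagonal_inv_sqrt_le hc hd'
  have hΔ := (l2_opNorm_diagonal_inv_sqrt_sub_le hc hd₂ hd').trans
    (div_le_div_of_nonneg_right hD (by positivity))
  rw [sub_sub_sub_cancel_left, norm_sub_rev]
  calc _ ≤ _ := norm_mul_mul_sub_mul_mul_le _ _ _ _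
    _ ≤ (√(dmin / 2))⁻¹ * ε * (√(dmin / 2))⁻¹ +
          ε / (2 * √(dmin / 2) ^ 3) * dmax * ((√(dmin / 2))⁻¹ + (√dmin)⁻¹) := by
      gcongr
    _ = _ := by
      obtain ⟨s, hs, rfl⟩ : ∃ s, 0 < s ∧ dmin = s ^ 2 :=
        ⟨√dmin, by positivity, (Real.sq_sqrt hdmin.le).symm⟩
      have hr := Real.sq_sqrt (zero_le_two (α := ℝ))
      rw [Real.sqrt_div' _ zero_le_two, Real.sqrt_sq hs.le]
      field_simp
      linear_combination ε * (2 * s ^ 2 + dmax * (√2 ^ 2 + 2 + √2)) * hr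

/-- **Perturbation bound for the normalized Laplacian.**
If `W, W'` are symmetric, `D, D'` diagonal with positive diagonals, all diagonal entries
of `D` at least `d_min` and of `D'` at least `d_min/2`, `‖D' − D‖₂ ≤ ε`, `‖W' − W‖₂ ≤ ε`,
and `‖W‖₂ ≤ d_max`, then the normalized Laplacians satisfy
`‖𝓛' − 𝓛‖₂ ≤ ε (2/d_min + (2 + √2) d_max / d_min²)`. -/
theorem normalized_laplacian_perturbation
    (n : ℕ)
    (W W' : Matrix (Fin n) (Fin n) ℝ)
    (hW : W.IsSymm) (hW' : W'.IsSymm)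
    (d d' : Fin n → ℝ)
    (hdpos : ∀ i, 0 < d i) (hd'pos : ∀ i, 0 < d' i)
    (dmin dmax ε : ℝ) (hdmin : 0 < dmin) (hε : 0 ≤ ε)
    (hd : ∀ i, dmin ≤ d i) (hd' : ∀ i, dmin / 2 ≤ d' i)
    (hD : opNorm (Matrix.diagonal d' - Matrix.diagonal d) ≤ ε)
    (hWpert : opNorm (W' - W) ≤ ε)
    (hWnorm : opNorm W ≤ dmax) :
    opNorm
        ((1 - Matrix.diagonal (fun i => (Real.sqrt (d' i))⁻¹) * W' *
            Matrix.diagonal (fun i => (Real.sqrt (d' i))⁻¹)) -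
          (1 - Matrix.diagonal (fun i => (Real.sqrt (d i))⁻¹) * W *
            Matrix.diagonal (fun i => (Real.sqrt (d i))⁻¹))) ≤
      ε * (2 / dmin + (2 + Real.sqrt 2) * dmax / dmin ^ 2) :=
  normalized_laplacian_perturbation_general n W W' d d' dmin dmax ε hdmin hd hd' hD hWpert hWnorm
end
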